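/- Let n ≥ 2, η_n > 0, and 1/2 ≤ δ < 1. Let a_{n,S}* be the unique nonnegative solution of Φ(n^{1/2}(a − η_n)) − Φ(n^{1/2}(−a − η_n)) = δ and let a_{n,S}** be the unique nonnegative solution of T_{n−1}(n^{1/2}(a − η_n)) − T_{n−1}(n^{1/2}(−a − η_n)) = δ. Then a_{n,S}** ≥ a_{n,S}*. -/

import Mathlib

open MeasureTheory ProbabilityTheory Filter
open scoped NNReal

/-- Standard normal cumulative distribution function Φ. -/
noncomputable def stdNormCDF (x : ℝ) : ℝ :=
  ((gaussianReal 0 1) (Set.Iic x)).toReal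

/-- Soft-thresholding (LASSO) estimator with threshold η, as a function of ȳ. -/
noncomputable def softThresh (η y : ℝ) : ℝ := Real.sign y * max (|y| - η) 0

/-- Hard-thresholding estimator with threshold η, as a function of ȳ. -/
noncomputable def hardThresh (η y : ℝ) : ℝ := if η < |y| then y else 0

/-- Adaptive LASSO estimator with tuning parameter η, as a function of ȳ. -/
noncomputable def adaLasso (η y : ℝ) : ℝ := if |y| ≤ η then 0 else y - η ^ 2 / y

/-- Coverage probability `P_{n,θ}(θ ∈ [est(ȳ) - a, est(ȳ) + b])` in the
known-variance case (σ = 1), where ȳ ~ N(θ, 1/n). -/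
noncomputable def cover (n : ℕ) (est : ℝ → ℝ) (a b θ : ℝ) : ℝ :=
  ((gaussianReal θ ((n : ℝ≥0))⁻¹)
    {y : ℝ | est y - a ≤ θ ∧ θ ≤ est y + b}).toReal

/-- The distribution of `σ̂ = sqrt(Q/(n-1))` where `Q ~ χ²_{n-1}`; i.e. the law of the
square root of a chi-square random variable with `n-1` degrees of freedom divided by
`n - 1` (whose density is `h_n`). The chi-square distribution with `k` degrees of
freedom is the Gamma distribution with shape `k/2` and rate `1/2`. -/
noncomputable def sigmaHatLaw (n : ℕ) : Measure ℝ :=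
  (gammaMeasure (((n : ℝ) - 1) / 2) (1 / 2)).map
    (fun q => Real.sqrt (q / ((n : ℝ) - 1)))

/-- The cumulative distribution function `T_{n-1}` of the Student t-distribution with
`n-1` degrees of freedom, via `T_{n-1}(x) = ∫₀^∞ Φ(s x) h_n(s) ds`. -/
noncomputable def studentCDF (n : ℕ) (x : ℝ) : ℝ :=
  ∫ s, stdNormCDF (s * x) ∂(sigmaHatLaw n)

/-- Coverage probability `P_{n,θ}(θ ∈ [est(σ̂, ȳ) - σ̂ a, est(σ̂, ȳ) + σ̂ a])` in the
unknown-variance case (true σ = 1): `ȳ ~ N(θ, 1/n)` and `σ̂` (independent of `ȳ`) has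
law `sigmaHatLaw n`; here `est s y` is the feasible estimator computed from `ȳ = y` and
`σ̂ = s`. -/
noncomputable def coverUV (n : ℕ) (est : ℝ → ℝ → ℝ) (a θ : ℝ) : ℝ :=
  (((gaussianReal θ ((n : ℝ≥0))⁻¹).prod (sigmaHatLaw n))
    {p : ℝ × ℝ | est p.2 p.1 - p.2 * a ≤ θ ∧ θ ≤ est p.2 p.1 + p.2 * a}).toReal

/-!
Write `T(x) = E Φ(σ̂ x)`. For `x ≥ 0` the map `s ↦ Φ(s x)` is concave on `[0, ∞)`, because the
normal density decreases there, and `E σ̂ ≤ √(E σ̂²) = 1`; Jensen's inequality then gives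
`T(x) ≤ Φ(x)`, and the symmetry `T(-x) = 1 - T(x)` gives `T(x) ≥ Φ(x)` for `x ≤ 0`.
At `a = a**` the upper endpoint `√n (a - η)` is nonnegative (otherwise the coverage would be
below `T(0) = 1/2 ≤ δ`) and the lower endpoint is nonpositive, so the known-variance coverage at
`a**` is at least `δ`. That coverage is strictly increasing in `a`, hence `a* ≤ a**`.
-/

open Real Set

section StandardNormal

lemma continuous_gaussianPDFReal (μ : ℝ) (v : ℝ≥0) : Continuous (gaussianPDFReal μ v) := by
  unfold gaussianPDFReal
  fun_prop

lemma antitoneOn_gaussianPDFReal (μ : ℝ) (v : ℝ≥0) :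
    AntitoneOn (gaussianPDFReal μ v) (Ici μ) := by
  intro a ha b hb hab
  simp only [gaussianPDFReal]
  gcongr
  exacts [sub_nonneg.2 ha]

lemma stdNormCDF_eq_cdf : stdNormCDF = cdf (gaussianReal 0 1) :=
  funext fun x => (cdf_eq_real _ x).symm

lemma stdNormCDF_nonneg (x : ℝ) : 0 ≤ stdNormCDF x := by
  rw [stdNormCDF_eq_cdf]
  exact cdf_nonneg _ x

lemma stdNormCDF_le_one (x : ℝ) : stdNormCDF x ≤ 1 := by
  rw [stdNormCDF_eq_cdf]
  exact cdf_le_one _ x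

lemma stdNormCDF_eq_setIntegral (x : ℝ) :
    stdNormCDF x = ∫ t in Iic x, gaussianPDFReal 0 1 t := by
  rw [stdNormCDF, gaussianReal_apply_eq_integral 0 one_ne_zero, ENNReal.toReal_ofReal
    (setIntegral_nonneg measurableSet_Iic fun t _ => gaussianPDFReal_nonneg 0 1 t)]

lemma stdNormCDF_sub_stdNormCDF (a b : ℝ) :
    stdNormCDF b - stdNormCDF a = ∫ t in a..b, gaussianPDFReal 0 1 t := by
  simp only [stdNormCDF_eq_setIntegral]
  exact intervalIntegral.integral_Iic_sub_Iic (integrable_gaussianPDFReal 0 1).integrableOn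
    (integrable_gaussianPDFReal 0 1).integrableOn

lemma hasDerivAt_stdNormCDF (x : ℝ) : HasDerivAt stdNormCDF (gaussianPDFReal 0 1 x) x := by
  have h : stdNormCDF = fun y => stdNormCDF 0 + ∫ t in (0 : ℝ)..y, gaussianPDFReal 0 1 t :=
    funext fun y => by rw [← stdNormCDF_sub_stdNormCDF]; ring
  rw [h]
  exact ((continuous_gaussianPDFReal 0 1).integral_hasStrictDerivAt 0 x).hasDerivAt.const_add _

lemma deriv_stdNormCDF : deriv stdNormCDF = gaussianPDFReal 0 1 :=
  funext fun x => (hasDerivAt_stdNormCDF x).deriv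

lemma differentiable_stdNormCDF : Differentiable ℝ stdNormCDF :=
  fun x => (hasDerivAt_stdNormCDF x).differentiableAt

lemma continuous_stdNormCDF : Continuous stdNormCDF :=
  differentiable_stdNormCDF.continuous

lemma stdNormCDF_strictMono : StrictMono stdNormCDF :=
  strictMono_of_deriv_pos fun x => by
    rw [deriv_stdNormCDF]
    exact gaussianPDFReal_pos 0 1 x one_ne_zero

lemma stdNormCDF_pos (x : ℝ) : 0 < stdNormCDF x :=
  (stdNormCDF_nonneg (x - 1)).trans_lt (stdNormCDF_strictMono (by linarith))

lemma stdNormCDF_neg (x : ℝ) : stdNormCDF (-x) = 1 - stdNormCDF x := by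
  have hsymm : (gaussianReal 0 1).map (fun y => -y) = gaussianReal 0 1 := by
    simpa using gaussianReal_map_neg (μ := 0) (v := 1)
  have := nullSingletonClass_gaussianReal (μ := 0) one_ne_zero
  calc stdNormCDF (-x) = ((gaussianReal 0 1).map (fun y => -y)).real (Iic (-x)) := by
        rw [hsymm]; rfl
    _ = (gaussianReal 0 1).real (Ici x) := by
        rw [map_measureReal_apply measurable_neg measurableSet_Iic]
        congr 1
        ext y
        simp
    _ = (gaussianReal 0 1).real (Iic x)ᶜ := by
        rw [compl_Iic]
        exact measureReal_congr Ioi_ae_eq_Ici.symm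
    _ = 1 - stdNormCDF x := probReal_compl_eq_one_sub measurableSet_Iic

lemma stdNormCDF_zero : stdNormCDF 0 = 1 / 2 := by
  linarith [neg_zero (G := ℝ) ▸ stdNormCDF_neg 0]

lemma concaveOn_stdNormCDF : ConcaveOn ℝ (Ici 0) stdNormCDF := by
  refine AntitoneOn.concaveOn_of_deriv (convex_Ici 0) continuous_stdNormCDF.continuousOn
    differentiable_stdNormCDF.differentiableOn ?_
  rw [deriv_stdNormCDF, interior_Ici]
  exact (antitoneOn_gaussianPDFReal 0 1).mono Ioi_subset_Ici_self

lemma strictMono_stdNormCDF_sub {c : ℝ} (hc : 0 < c) (η : ℝ) :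
    StrictMono fun a => stdNormCDF (c * (a - η)) - stdNormCDF (c * (-a - η)) := by
  intro a b hab
  have hup := stdNormCDF_strictMono (mul_lt_mul_of_pos_left (by linarith : a - η < b - η) hc)
  have hlow := stdNormCDF_strictMono (mul_lt_mul_of_pos_left (by linarith : -b - η < -a - η) hc)
  dsimp only
  linarith

end StandardNormal

section Gamma

variable {a r : ℝ}

lemma measurable_gammaPDF (a r : ℝ) : Measurable (gammaPDF a r) :=
  (measurable_gammaPDFReal a r).ennreal_ofReal

lemma toReal_gammaPDF (ha : 0 < a) (hr : 0 < r) (x : ℝ) :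
    (gammaPDF a r x).toReal = gammaPDFReal a r x :=
  ENNReal.toReal_ofReal (gammaPDFReal_nonneg ha hr x)

lemma integrable_gammaPDFReal (ha : 0 < a) (hr : 0 < r) : Integrable (gammaPDFReal a r) := by
  simpa only [toReal_gammaPDF ha hr] using integrable_toReal_of_lintegral_ne_top
    (measurable_gammaPDF a r).aemeasurable
    (by simp [lintegral_gammaPDF_eq_one ha hr])

lemma integral_gammaPDFReal (ha : 0 < a) (hr : 0 < r) : ∫ x, gammaPDFReal a r x = 1 := by
  simpa only [toReal_gammaPDF ha hr, lintegral_gammaPDF_eq_one ha hr, ENNReal.toReal_one]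
    using integral_toReal (μ := volume) (measurable_gammaPDF a r).aemeasurable
    (ae_of_all _ fun _ => ENNReal.ofReal_lt_top)

lemma mul_gammaPDFReal (ha : 0 < a) (hr : 0 < r) (x : ℝ) :
    x * gammaPDFReal a r x = a / r * gammaPDFReal (a + 1) r x := by
  unfold gammaPDFReal
  split_ifs with hx
  · rw [Gamma_add_one ha.ne', rpow_add_one hr.ne', add_sub_cancel_right,
      show x ^ a = x ^ (a - 1) * x by
        simpa using rpow_add' hx (by simpa using ha.ne' : a - 1 + 1 ≠ 0)]
    field_simp
  · ring

lemma integrable_id_gammaMeasure (ha : 0 < a) (hr : 0 < r) :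
    Integrable (fun x => x) (gammaMeasure a r) := by
  rw [gammaMeasure, integrable_withDensity_iff_integrable_smul'
    (measurable_gammaPDF a r) (ae_of_all _ fun _ => ENNReal.ofReal_lt_top)]
  simp_rw [toReal_gammaPDF ha hr, smul_eq_mul, mul_comm (gammaPDFReal a r _),
    mul_gammaPDFReal ha hr]
  exact (integrable_gammaPDFReal (by linarith) hr).const_mul _

lemma integral_id_gammaMeasure (ha : 0 < a) (hr : 0 < r) :
    ∫ x, x ∂gammaMeasure a r = a / r := by
  rw [gammaMeasure, integral_withDensity_eq_integral_toReal_smul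
    (measurable_gammaPDF a r) (ae_of_all _ fun _ => ENNReal.ofReal_lt_top)]
  simp_rw [toReal_gammaPDF ha hr, smul_eq_mul, mul_comm (gammaPDFReal a r _),
    mul_gammaPDFReal ha hr]
  rw [integral_const_mul, integral_gammaPDFReal (by linarith) hr, mul_one]

lemma ae_nonneg_gammaMeasure (a r : ℝ) : ∀ᵐ x ∂gammaMeasure a r, 0 ≤ x := by
  rw [ae_iff]
  simp only [not_le]
  change gammaMeasure a r (Iio 0) = 0
  rw [gammaMeasure, withDensity_apply _ measurableSet_Iio]
  exact lintegral_gammaPDF_of_nonpos le_rfl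

end Gamma

section Sqrt

variable {α : Type*} [MeasurableSpace α] {μ : Measure α} {f : α → ℝ}

lemma MeasureTheory.Integrable.sqrt [IsFiniteMeasure μ] (hf : Integrable f μ)
    (hf0 : 0 ≤ᵐ[μ] f) :
    Integrable (fun x => √(f x)) μ := by
  refine (((integrable_const 1).add hf).div_const 2).mono'
    (continuous_sqrt.comp_aestronglyMeasurable hf.aestronglyMeasurable) ?_
  filter_upwards [hf0] with x hx
  rw [Real.norm_of_nonneg (sqrt_nonneg _)]
  simp only [Pi.add_apply]
  nlinarith [sq_sqrt hx, sq_nonneg (√(f x) - 1)]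

lemma integral_sqrt_le_sqrt_integral [IsProbabilityMeasure μ] (hf : Integrable f μ)
    (hf0 : 0 ≤ᵐ[μ] f) : ∫ x, √(f x) ∂μ ≤ √(∫ x, f x ∂μ) :=
  strictConcaveOn_sqrt.concaveOn.le_map_integral continuous_sqrt.continuousOn isClosed_Ici
    hf0 hf (hf.sqrt hf0)

end Sqrt

section SigmaHat

lemma sigmaHatLaw_ae_nonneg (n : ℕ) : ∀ᵐ s ∂sigmaHatLaw n, 0 ≤ s := by
  rw [sigmaHatLaw, ae_map_iff (by fun_prop) measurableSet_Ici]
  exact ae_of_all _ fun _ => sqrt_nonneg _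

variable {n : ℕ} (hn : 1 < n)
include hn

lemma isProbabilityMeasure_chiSq :
    IsProbabilityMeasure (gammaMeasure (((n : ℝ) - 1) / 2) (1 / 2)) := by
  have : (1 : ℝ) < n := by exact_mod_cast hn
  exact isProbabilityMeasure_gammaMeasure (by linarith) (by norm_num)

lemma isProbabilityMeasure_sigmaHatLaw : IsProbabilityMeasure (sigmaHatLaw n) := by
  have := isProbabilityMeasure_chiSq hn
  exact Measure.isProbabilityMeasure_map (by fun_prop)

lemma integrable_chiSq_div :
    Integrable (fun q => q / ((n : ℝ) - 1)) (gammaMeasure (((n : ℝ) - 1) / 2) (1 / 2)) := by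
  have : (1 : ℝ) < n := by exact_mod_cast hn
  exact (integrable_id_gammaMeasure (by linarith) (by norm_num)).div_const _

lemma integral_chiSq_div :
    ∫ q, q / ((n : ℝ) - 1) ∂gammaMeasure (((n : ℝ) - 1) / 2) (1 / 2) = 1 := by
  have : (1 : ℝ) < n := by exact_mod_cast hn
  rw [integral_div, integral_id_gammaMeasure (by linarith) (by norm_num)]
  field_simp
  exact div_self (by linarith)

lemma ae_nonneg_chiSq_div :
    ∀ᵐ q ∂gammaMeasure (((n : ℝ) - 1) / 2) (1 / 2), 0 ≤ q / ((n : ℝ) - 1) := by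
  have : (1 : ℝ) < n := by exact_mod_cast hn
  filter_upwards [ae_nonneg_gammaMeasure _ _] with q hq
  exact div_nonneg hq (by linarith)

lemma integrable_id_sigmaHatLaw : Integrable (fun s => s) (sigmaHatLaw n) := by
  have := isProbabilityMeasure_chiSq hn
  rw [sigmaHatLaw, integrable_map_measure measurable_id'.aestronglyMeasurable (by fun_prop)]
  exact (integrable_chiSq_div hn).sqrt (ae_nonneg_chiSq_div hn)

lemma integral_id_sigmaHatLaw_le_one : ∫ s, s ∂sigmaHatLaw n ≤ 1 := by
  have := isProbabilityMeasure_chiSq hn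
  rw [sigmaHatLaw, integral_map (by fun_prop) measurable_id'.aestronglyMeasurable]
  calc _ ≤ √(∫ q, q / ((n : ℝ) - 1) ∂gammaMeasure (((n : ℝ) - 1) / 2) (1 / 2)) :=
        integral_sqrt_le_sqrt_integral (integrable_chiSq_div hn) (ae_nonneg_chiSq_div hn)
    _ = 1 := by rw [integral_chiSq_div hn, sqrt_one]

end SigmaHat

lemma integrable_stdNormCDF_mul {α : Type*} [MeasurableSpace α] {μ : Measure α}
    [IsFiniteMeasure μ] {f : α → ℝ} (hf : AEMeasurable f μ) (x : ℝ) :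
    Integrable (fun s => stdNormCDF (f s * x)) μ :=
  Integrable.of_bound ((continuous_stdNormCDF.measurable.comp_aemeasurable
    (hf.mul_const x)).aestronglyMeasurable) 1 (ae_of_all _ fun s => by
      rw [Real.norm_of_nonneg (stdNormCDF_nonneg _)]
      exact stdNormCDF_le_one _)

section Student

variable {n : ℕ} (hn : 1 < n)
include hn

lemma integrable_stdNormCDF_mul_sigmaHatLaw (x : ℝ) :
    Integrable (fun s => stdNormCDF (s * x)) (sigmaHatLaw n) :=
  have := isProbabilityMeasure_sigmaHatLaw hn
  integrable_stdNormCDF_mul aemeasurable_id' x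

lemma studentCDF_le_stdNormCDF {x : ℝ} (hx : 0 ≤ x) : studentCDF n x ≤ stdNormCDF x := by
  have := isProbabilityMeasure_sigmaHatLaw hn
  have hconc : ConcaveOn ℝ (Ici 0) fun s => stdNormCDF (s * x) :=
    (concaveOn_stdNormCDF.comp_linearMap (LinearMap.id.smulRight x)).subset
      (fun s hs => mul_nonneg hs hx) (convex_Ici 0)
  calc studentCDF n x ≤ stdNormCDF ((∫ s, s ∂sigmaHatLaw n) * x) :=
        hconc.le_map_integral (continuous_stdNormCDF.comp (by fun_prop)).continuousOn isClosed_Ici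
          (sigmaHatLaw_ae_nonneg n) (integrable_id_sigmaHatLaw hn)
          (integrable_stdNormCDF_mul_sigmaHatLaw hn x)
    _ ≤ stdNormCDF x :=
        stdNormCDF_strictMono.monotone
          (mul_le_of_le_one_left hx (integral_id_sigmaHatLaw_le_one hn))

lemma studentCDF_neg (x : ℝ) : studentCDF n (-x) = 1 - studentCDF n x := by
  have := isProbabilityMeasure_sigmaHatLaw hn
  simp only [studentCDF, mul_neg, stdNormCDF_neg]
  rw [integral_sub (integrable_const 1) (integrable_stdNormCDF_mul_sigmaHatLaw hn x)]
  simp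

lemma stdNormCDF_le_studentCDF {x : ℝ} (hx : x ≤ 0) : stdNormCDF x ≤ studentCDF n x := by
  have h := studentCDF_le_stdNormCDF hn (neg_nonneg.2 hx)
  rw [studentCDF_neg hn, stdNormCDF_neg] at h
  linarith

lemma studentCDF_zero : studentCDF n 0 = 1 / 2 := by
  have := isProbabilityMeasure_sigmaHatLaw hn
  simp [studentCDF, stdNormCDF_zero]

lemma studentCDF_pos (x : ℝ) : 0 < studentCDF n x := by
  have := isProbabilityMeasure_sigmaHatLaw hn
  rw [studentCDF, integral_pos_iff_support_of_nonneg (fun s => stdNormCDF_nonneg _)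
    (integrable_stdNormCDF_mul_sigmaHatLaw hn x)]
  simp [Function.support, (stdNormCDF_pos _).ne']

lemma studentCDF_mono : Monotone (studentCDF n) := fun x y hxy =>
  integral_mono_ae (integrable_stdNormCDF_mul_sigmaHatLaw hn x)
    (integrable_stdNormCDF_mul_sigmaHatLaw hn y)
    (by filter_upwards [sigmaHatLaw_ae_nonneg n] with s hs
        exact stdNormCDF_strictMono.monotone (mul_le_mul_of_nonneg_left hxy hs))

end Student

theorem stmt_14_general (n : ℕ) (hn : 2 ≤ n) (η : ℝ) (hη : 0 < η) (δ : ℝ) (hδ0 : 1 / 2 ≤ δ)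
    (astar astar2 : ℝ) (hastar2 : 0 ≤ astar2)
    (heq : stdNormCDF (Real.sqrt n * (astar - η)) -
      stdNormCDF (Real.sqrt n * (-astar - η)) = δ)
    (heq2 : studentCDF n (Real.sqrt n * (astar2 - η)) -
      studentCDF n (Real.sqrt n * (-astar2 - η)) = δ) :
    astar2 ≥ astar := by
  have hc : 0 < √(n : ℝ) := sqrt_pos.2 (by positivity)
  have hlow : √(n : ℝ) * (-astar2 - η) ≤ 0 :=
    mul_nonpos_of_nonneg_of_nonpos hc.le (by linarith)
  have hup : 0 ≤ √(n : ℝ) * (astar2 - η) := by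
    by_contra! h
    have := studentCDF_mono hn h.le
    linarith [studentCDF_zero hn, studentCDF_pos hn (√(n : ℝ) * (-astar2 - η))]
  have hcover :
      δ ≤ stdNormCDF (√(n : ℝ) * (astar2 - η)) - stdNormCDF (√(n : ℝ) * (-astar2 - η)) := by
    linarith [studentCDF_le_stdNormCDF hn hup, stdNormCDF_le_studentCDF hn hlow]
  exact (strictMono_stdNormCDF_sub hc η).le_iff_le.1 (heq ▸ hcover)

/-- For `1/2 ≤ δ < 1`, the half-length `a**` of the symmetric δ-level interval in the
unknown-variance case is at least the half-length `a*` in the known-variance case. -/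
theorem stmt_14 (n : ℕ) (hn : 2 ≤ n) (η : ℝ) (hη : 0 < η) (δ : ℝ) (hδ0 : 1 / 2 ≤ δ)
    (hδ1 : δ < 1) (astar astar2 : ℝ) (hastar : 0 ≤ astar) (hastar2 : 0 ≤ astar2)
    (heq : stdNormCDF (Real.sqrt n * (astar - η)) -
      stdNormCDF (Real.sqrt n * (-astar - η)) = δ)
    (heq2 : studentCDF n (Real.sqrt n * (astar2 - η)) -
      studentCDF n (Real.sqrt n * (-astar2 - η)) = δ) :
    astar2 ≥ astar :=
  stmt_14_general n hn η hη δ hδ0 astar astar2 hastar2 heq heq2
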